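/- arXiv:1206.0755 — 5 statements merged into one kernel-verified Lean document; each statement's English description precedes it below -/
import Mathlib

section
/- Let X, Y ⊆ V with X ≠ Y, let K be an operator genuine on X and K' an operator genuine on Y. Then Tr(K K') = 0; that is, genuine operators on distinct subsets are orthogonal with respect to the Hilbert–Schmidt inner product. -/
open Matrix
open scoped ComplexOrder

noncomputable section

/-- Operators on the multipartite system with sites `V` and local dimensions `d`. -/
abbrev Op (V : Type) (d : V → ℕ) : Type :=
  Matrix ((v : V) → Fin (d v)) ((v : V) → Fin (d v)) ℂ

/-- `M` is supported on the set of sites `S`: it vanishes on pairs of configurations that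
differ outside `S`, and its entries depend only on the restrictions of the configurations
to `S` (it acts as the identity outside `S`). -/
def SupportedOn {V : Type} (d : V → ℕ) (S : Finset V) (M : Op V d) : Prop :=
  (∀ x y, (∃ v, v ∉ S ∧ x v ≠ y v) → M x y = 0) ∧
  (∀ x y x' y', (∀ v ∈ S, x v = x' v) → (∀ v ∈ S, y v = y' v) →
    (∀ v, v ∉ S → x v = y v) → (∀ v, v ∉ S → x' v = y' v) → M x y = M x' y')

/-- Combine a configuration on the complement of `T` with a configuration on `T`. -/
def mergeConfig {V : Type} [DecidableEq V] (d : V → ℕ) (T : Finset V)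
    (x : (v : {v : V // v ∉ T}) → Fin (d v.1)) (z : (v : {v : V // v ∈ T}) → Fin (d v.1)) :
    (v : V) → Fin (d v) :=
  fun v => if h : v ∈ T then z ⟨v, h⟩ else x ⟨v, h⟩

/-- Partial trace over the sites in `T`. -/
def ptrace {V : Type} [Fintype V] [DecidableEq V] (d : V → ℕ) (T : Finset V) (M : Op V d) :
    Matrix ((v : {v : V // v ∉ T}) → Fin (d v.1)) ((v : {v : V // v ∉ T}) → Fin (d v.1)) ℂ :=
  fun x y => ∑ z : (v : {v : V // v ∈ T}) → Fin (d v.1),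
    M (mergeConfig d T x z) (mergeConfig d T y z)

/-- Von Neumann entropy `S(σ) = −Σ_i λ_i log λ_i` (junk value `0` if `σ` is not Hermitian). -/
def vnEntropy {n : Type} [Fintype n] [DecidableEq n] (σ : Matrix n n ℂ) : ℝ :=
  if hσ : σ.IsHermitian then -∑ i, hσ.eigenvalues i * Real.log (hσ.eigenvalues i) else 0

/-- The reduced state `ρ_X` on the sites in `X`. -/
def marg {V : Type} [Fintype V] [DecidableEq V] (d : V → ℕ) (ρ : Op V d) (X : Finset V) :=
  ptrace d Xᶜ ρ

/-- Conditional mutual information `I(A:C|B) = S(ρ_{AB}) + S(ρ_{BC}) − S(ρ_{ABC}) − S(ρ_B)`. -/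
def cmi {V : Type} [Fintype V] [DecidableEq V] (d : V → ℕ) (ρ : Op V d)
    (A B C : Finset V) : ℝ :=
  vnEntropy (marg d ρ (A ∪ B)) + vnEntropy (marg d ρ (B ∪ C))
    - vnEntropy (marg d ρ (A ∪ B ∪ C)) - vnEntropy (marg d ρ B)

/-- `B` shields `A` from `C` in the graph `G`: every walk from `A` to `C` meets `B`. -/
def Shields {V : Type} (G : SimpleGraph V) (A B C : Finset V) : Prop :=
  ∀ a ∈ A, ∀ c ∈ C, ∀ w : G.Walk a c, ∃ b ∈ B, b ∈ w.support

/-- `(ρ, G)` is a quantum Markov network: `I(A:C|B) = 0` whenever `B` shields `A` from `C`. -/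
def IsMarkovNetwork {V : Type} [Fintype V] [DecidableEq V] (d : V → ℕ)
    (G : SimpleGraph V) (ρ : Op V d) : Prop :=
  ∀ A B C : Finset V, Disjoint A B → Disjoint A C → Disjoint B C →
    Shields G A B C → cmi d ρ A B C = 0

/-- A clique of `G`: a nonempty set of vertices, any two distinct ones adjacent. -/
def IsCliqueF {V : Type} (G : SimpleGraph V) (Q : Finset V) : Prop :=
  Q.Nonempty ∧ G.IsClique (Q : Set V)

/-- `K` is a genuine operator on `X`: supported on `X` with all nontrivial partial traces
over subsets of `X` vanishing. -/
def Genuine {V : Type} [Fintype V] [DecidableEq V] (d : V → ℕ) (X : Finset V)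
    (K : Op V d) : Prop :=
  SupportedOn d X K ∧ ∀ Y : Finset V, Y.Nonempty → Y ⊆ X → ptrace d Y K = 0

/-- `K` is the cumulant decomposition of `H`: each `K X` is genuine on `X` and they sum to `H`. -/
def IsCumulantDecomp {V : Type} [Fintype V] [DecidableEq V] (d : V → ℕ)
    (H : Op V d) (K : Finset V → Op V d) : Prop :=
  (∀ X : Finset V, Genuine d X (K X)) ∧ H = ∑ X : Finset V, K X

/-- `G` contains no triangle. -/
def TriangleFree {V : Type} (G : SimpleGraph V) : Prop :=
  ∀ a b c : V, G.Adj a b → G.Adj a c → G.Adj b c → False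

lemma aux_orth {V : Type} [Fintype V] [DecidableEq V]
    (d : V → ℕ) (hd : ∀ v, 1 ≤ d v) (S T : Finset V) (hTS : ∀ v ∈ T, v ∉ S)
    (M N : Op V d) (hM : SupportedOn d S M) (hN : ptrace d T N = 0) :
    (N * M).trace = 0 := by
  classical
  set A := (v : {v : V // v ∉ T}) → Fin (d v.1) with hA
  set B := (v : {v : V // v ∈ T}) → Fin (d v.1) with hB
  let z0 : B := fun v => ⟨0, hd v.1⟩
  let m : A → B → (v : V) → Fin (d v) := fun a z => mergeConfig d T a z
  -- the value of M on merged configs does not depend on the T-part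
  have key : ∀ (a b : A) (z z' : B), M (m b z) (m a z) = M (m b z') (m a z') := by
    intro a b z z'
    by_cases h : ∀ v : {v : V // v ∉ T}, v.1 ∉ S → b v = a v
    · apply hM.2
      · intro v hv
        have hvT : v ∉ T := fun hT => hTS v hT hv
        simp [m, mergeConfig, hvT]
      · intro v hv
        have hvT : v ∉ T := fun hT => hTS v hT hv
        simp [m, mergeConfig, hvT]
      · intro v hv
        by_cases hvT : v ∈ T
        · simp [m, mergeConfig, hvT]
        · simpa [m, mergeConfig, hvT] using h ⟨v, hvT⟩ hv
      · intro v hv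
        by_cases hvT : v ∈ T
        · simp [m, mergeConfig, hvT]
        · simpa [m, mergeConfig, hvT] using h ⟨v, hvT⟩ hv
    · push_neg at h
      obtain ⟨v, hvS, hba⟩ := h
      have hne : ∀ w : B, m b w v.1 ≠ m a w v.1 := by
        intro w
        simpa [m, mergeConfig, v.2] using hba
      rw [hM.1 _ _ ⟨v.1, hvS, hne z⟩, hM.1 _ _ ⟨v.1, hvS, hne z'⟩]
  have hptr : ∀ a b : A, (∑ z : B, N (m a z) (m b z)) = 0 := by
    intro a b
    have := congrFun (congrFun hN a) b
    simpa [ptrace] using this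
  -- split configurations via the equivalence
  let e : ((v : V) → Fin (d v)) ≃ B × A :=
    Equiv.piEquivPiSubtypeProd (· ∈ T) (fun v => Fin (d v))
  have hm : ∀ (z : B) (a : A), e.symm (z, a) = m a z := by
    intro z a; funext v; rfl
  have h1 : (N * M).trace = ∑ x, ∑ y, N x y * M y x := by
    simp [Matrix.trace, Matrix.mul_apply, Matrix.diag]
  -- collapse the inner sum: M vanishes unless the T-parts agree
  have h2 : ∀ (z : B) (a : A),
      (∑ y, N (m a z) y * M y (m a z))
        = ∑ b : A, N (m a z) (m b z) * M (m b z) (m a z) := by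
    intro z a
    rw [← Equiv.sum_comp e.symm (fun y => N (m a z) y * M y (m a z))]
    rw [Fintype.sum_prod_type]
    rw [Finset.sum_eq_single_of_mem z (Finset.mem_univ z)]
    · exact Finset.sum_congr rfl fun b _ => by rw [hm]
    · intro w _ hw
      apply Finset.sum_eq_zero
      intro b _
      have : ∃ v : {v : V // v ∈ T}, w v ≠ z v := Function.ne_iff.mp hw
      obtain ⟨v, hv⟩ := this
      have hMz : M (e.symm (w, b)) (m a z) = 0 := by
        apply hM.1
        refine ⟨v.1, hTS v.1 v.2, ?_⟩
        simpa [hm, m, mergeConfig, v.2] using hv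
      rw [hMz, mul_zero]
  have h3 : (N * M).trace
      = ∑ z : B, ∑ a : A, ∑ b : A, N (m a z) (m b z) * M (m b z0) (m a z0) := by
    rw [h1, ← Equiv.sum_comp e.symm (fun x => ∑ y, N x y * M y x)]
    rw [Fintype.sum_prod_type]
    refine Finset.sum_congr rfl fun z _ => Finset.sum_congr rfl fun a _ => ?_
    rw [hm, h2]
    exact Finset.sum_congr rfl fun b _ => by rw [key a b z z0]
  rw [h3, Finset.sum_comm]
  apply Finset.sum_eq_zero
  intro a _
  rw [Finset.sum_comm]
  apply Finset.sum_eq_zero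
  intro b _
  rw [← Finset.sum_mul, hptr a b, zero_mul]

/-- genuine operators on distinct subsets are orthogonal with respect to
the Hilbert–Schmidt inner product. -/
theorem genuine_orthogonal {V : Type} [Fintype V] [DecidableEq V]
    (d : V → ℕ) (hd : ∀ v, 1 ≤ d v) (X Y : Finset V) (hXY : X ≠ Y)
    (K K' : Op V d) (hK : Genuine d X K) (hK' : Genuine d Y K') :
    (K * K').trace = 0 := by
  by_cases h : X ⊆ Y
  · have hne : (Y \ X).Nonempty :=
      Finset.sdiff_nonempty.mpr fun hYX => hXY (subset_antisymm h hYX)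
    have hTS : ∀ v ∈ Y \ X, v ∉ X := fun v hv => (Finset.mem_sdiff.mp hv).2
    rw [Matrix.trace_mul_comm]
    exact aux_orth d hd X (Y \ X) hTS K K' hK.1
      (hK'.2 (Y \ X) hne Finset.sdiff_subset)
  · have hne : (X \ Y).Nonempty := Finset.sdiff_nonempty.mpr h
    have hTS : ∀ v ∈ X \ Y, v ∉ Y := fun v hv => (Finset.mem_sdiff.mp hv).2
    exact aux_orth d hd Y (X \ Y) hTS K' K hK'.1
      (hK.2 (X \ Y) hne Finset.sdiff_subset)

end
end

section
/- Let H be an operator on the multipartite system with cumulant decomposition H = Σ_{X ⊆ V} K_X (each K_X genuine on X). Then for every X ⊆ V, Tr(H K_X) = Tr(K_X²). -/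
open Matrix
open scoped ComplexOrder

noncomputable section

/-- Key orthogonality lemma: if `A` is supported on `S`, `B` is genuine on `X`,
and `X \ S` is nonempty, then `Tr(A B) = 0`. -/
lemma trace_mul_eq_zero_of_sdiff_nonempty {V : Type} [Fintype V] [DecidableEq V]
    (d : V → ℕ) (hd : ∀ v, 1 ≤ d v) (S X : Finset V) (A B : Op V d)
    (hA : SupportedOn d S A) (hB : Genuine d X B)
    (hT : (X \ S).Nonempty) : (A * B).trace = 0 := by
  set T : Finset V := X \ S with hTdef
  have hTX : T ⊆ X := Finset.sdiff_subset
  have hTS : ∀ v ∈ T, v ∉ S := fun v hv => (Finset.mem_sdiff.mp hv).2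
  have hpt : ptrace d T B = 0 := hB.2 T hT hTX
  let e : ((v : V) → Fin (d v)) ≃
      (((v : {v : V // v ∈ T}) → Fin (d v.1)) × ((v : {v : V // v ∉ T}) → Fin (d v.1))) :=
    Equiv.piEquivPiSubtypeProd (fun v => v ∈ T) (fun v => Fin (d v))
  have hmerge : ∀ (x : (v : {v : V // v ∉ T}) → Fin (d v.1))
      (z : (v : {v : V // v ∈ T}) → Fin (d v.1)), e.symm (z, x) = mergeConfig d T x z := by
    intro x z; funext v
    simp [e, Equiv.piEquivPiSubtypeProd, mergeConfig]
  set m := mergeConfig d T with hm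
  -- the crucial inner computation
  have main : ∀ x x' : (v : {v : V // v ∉ T}) → Fin (d v.1),
      ∑ z, ∑ z', A (m x z) (m x' z') * B (m x' z') (m x z) = 0 := by
    intro x x'
    have step1 : ∀ z, ∑ z', A (m x z) (m x' z') * B (m x' z') (m x z)
        = A (m x z) (m x' z) * B (m x' z) (m x z) := by
      intro z
      refine Finset.sum_eq_single_of_mem z (Finset.mem_univ z) ?_
      intro z' _ hne
      have : ∃ v, v ∉ S ∧ (m x z) v ≠ (m x' z') v := by
        obtain ⟨v, hv⟩ := Function.ne_iff.mp hne
        refine ⟨v.1, hTS v.1 v.2, ?_⟩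
        simp only [hm, mergeConfig, dif_pos v.2]
        exact fun h => hv h.symm
      rw [hA.1 _ _ this, zero_mul]
    simp only [step1]
    by_cases hcase : ∀ v : {v : V // v ∉ T}, v.1 ∉ S → x v = x' v
    · -- A-factor is independent of z; factor it out and use the vanishing partial trace
      have hz0 : (v : {v : V // v ∈ T}) → Fin (d v.1) := fun v => ⟨0, hd v.1⟩
      have hconst : ∀ z, A (m x z) (m x' z) = A (m x hz0) (m x' hz0) := by
        intro z
        refine hA.2 _ _ _ _ ?_ ?_ ?_ ?_
        · intro v hv
          have hvT : v ∉ T := fun h => hTS v h hv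
          simp [hm, mergeConfig, dif_neg hvT]
        · intro v hv
          have hvT : v ∉ T := fun h => hTS v h hv
          simp [hm, mergeConfig, dif_neg hvT]
        · intro v hv
          by_cases hvT : v ∈ T
          · simp [hm, mergeConfig, dif_pos hvT]
          · simp only [hm, mergeConfig, dif_neg hvT]
            exact hcase ⟨v, hvT⟩ hv
        · intro v hv
          by_cases hvT : v ∈ T
          · simp [hm, mergeConfig, dif_pos hvT]
          · simp only [hm, mergeConfig, dif_neg hvT]
            exact hcase ⟨v, hvT⟩ hv
      calc ∑ z, A (m x z) (m x' z) * B (m x' z) (m x z)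
          = A (m x hz0) (m x' hz0) * ∑ z, B (m x' z) (m x z) := by
            rw [Finset.mul_sum]
            exact Finset.sum_congr rfl fun z _ => by rw [hconst z]
        _ = A (m x hz0) (m x' hz0) * (ptrace d T B x' x) := rfl
        _ = 0 := by rw [hpt]; simp
    · push_neg at hcase
      obtain ⟨v, hvS, hvne⟩ := hcase
      refine Finset.sum_eq_zero fun z _ => ?_
      have : ∃ w, w ∉ S ∧ (m x z) w ≠ (m x' z) w := by
        refine ⟨v.1, hvS, ?_⟩
        simp only [hm, mergeConfig, dif_neg v.2]
        exact hvne
      rw [hA.1 _ _ this, zero_mul]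
  -- reindex the trace sum via the equivalence
  have htr : (A * B).trace = ∑ w, ∑ u, A w u * B u w := by
    simp [Matrix.trace, Matrix.mul_apply, Matrix.diag]
  rw [htr]
  rw [← Equiv.sum_comp e.symm (fun w => ∑ u, A w u * B u w)]
  have : ∀ p, ∑ u, A (e.symm p) u * B u (e.symm p)
      = ∑ q, A (e.symm p) (e.symm q) * B (e.symm q) (e.symm p) := fun p =>
    (Equiv.sum_comp e.symm (fun u => A (e.symm p) u * B u (e.symm p))).symm
  simp only [this]
  rw [Fintype.sum_prod_type]
  simp only [Fintype.sum_prod_type, hmerge]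
  -- now reorder sums: current shape is ∑ z, ∑ x, ∑ z', ∑ x'
  rw [Finset.sum_comm]
  refine Finset.sum_eq_zero fun x _ => ?_
  -- shape: ∑ z, ∑ z', ∑ x', f
  have swap1 : ∀ z : (v : {v : V // v ∈ T}) → Fin (d v.1),
      (∑ z', ∑ x', A (m x z) (m x' z') * B (m x' z') (m x z))
      = ∑ x', ∑ z', A (m x z) (m x' z') * B (m x' z') (m x z) :=
    fun z => Finset.sum_comm
  simp only [swap1]
  rw [Finset.sum_comm]
  exact Finset.sum_eq_zero fun x' _ => main x x'

/-- for the cumulant decomposition `H = Σ_X K_X`,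
one has `Tr(H K_X) = Tr(K_X²)` for every `X`. -/
theorem trace_mul_cumulant {V : Type} [Fintype V] [DecidableEq V]
    (d : V → ℕ) (hd : ∀ v, 1 ≤ d v) (H : Op V d) (K : Finset V → Op V d)
    (hK : IsCumulantDecomp d H K) :
    ∀ X : Finset V, (H * K X).trace = (K X ^ 2).trace := by
  intro X
  obtain ⟨hgen, hsum⟩ := hK
  rw [hsum, Finset.sum_mul, Matrix.trace_sum]
  rw [Finset.sum_eq_single_of_mem X (Finset.mem_univ X)]
  · rw [pow_two]
  · intro Y _ hYX
    by_cases h : (X \ Y).Nonempty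
    · exact trace_mul_eq_zero_of_sdiff_nonempty d hd Y X (K Y) (K X)
        (hgen Y).1 (hgen X) h
    · have hXY : X ⊆ Y := by
        rw [Finset.not_nonempty_iff_eq_empty, Finset.sdiff_eq_empty_iff_subset] at h
        exact h
      have hYXne : (Y \ X).Nonempty := by
        rw [Finset.sdiff_nonempty]
        intro hYsub
        exact hYX (le_antisymm hYsub hXY)
      rw [Matrix.trace_mul_comm]
      exact trace_mul_eq_zero_of_sdiff_nonempty d hd X Y (K X) (K Y)
        (hgen X).1 (hgen Y) hYXne

end
end

section
/- Let a, c ∈ V with a ≠ c, and suppose H = H₁ + H₂ where H₁ is supported on V \ {c} and H₂ is supported on V \ {a}. If K is an operator genuine on a set X ⊆ V with a ∈ X and c ∈ X, then Tr(H K) = 0. Consequently, if K is the X-cumulant of H for such a set X, then K = 0. -/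
open Matrix
open scoped ComplexOrder

noncomputable section

section CumulantAux

variable {V : Type} [Fintype V] [DecidableEq V] (d : V → ℕ)

/-- Override: keep `x` on `X`, use `z` off `X`. -/
def ovrC (X : Finset V) (x z : (v : V) → Fin (d v)) : (v : V) → Fin (d v) :=
  fun v => if v ∈ X then x v else z v

/-- Normalized conditional expectation onto operators supported on `X`. -/
def EXC (X : Finset V) (M : Op V d) : Op V d :=
  fun x y => if ∀ v, v ∉ X → x v = y v then
    (∑ z : (v : V) → Fin (d v), M (ovrC d X x z) (ovrC d X y z))
      / (Fintype.card ((v : V) → Fin (d v)) : ℂ)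
  else 0

variable {d}

lemma cardC_ne_zero (hd : ∀ v, 1 ≤ d v) :
    (Fintype.card ((v : V) → Fin (d v)) : ℂ) ≠ 0 := by
  have : 0 < Fintype.card ((v : V) → Fin (d v)) :=
    @Fintype.card_pos _ _ ⟨fun v => ⟨0, hd v⟩⟩
  exact_mod_cast this.ne'

lemma supportedOn_monoC {Y X : Finset V} (h : Y ⊆ X) {M : Op V d}
    (hM : SupportedOn d Y M) : SupportedOn d X M := by
  constructor
  · exact fun x y ⟨v, hv, hne⟩ => hM.1 x y ⟨v, fun hvY => hv (h hvY), hne⟩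
  · intro x y x' y' hx hy hxy hx'y'
    by_cases hdiff : ∃ v, v ∉ Y ∧ x v ≠ y v
    · obtain ⟨v, hvY, hne⟩ := hdiff
      rw [hM.1 x y ⟨v, hvY, hne⟩, hM.1 x' y' ⟨v, hvY, ?_⟩]
      by_cases hvX : v ∈ X
      · rw [← hx v hvX, ← hy v hvX]; exact hne
      · exact absurd (hxy v hvX) hne
    · push_neg at hdiff
      refine hM.2 x y x' y' (fun v hv => hx v (h hv)) (fun v hv => hy v (h hv)) hdiff ?_
      intro v hvY
      by_cases hvX : v ∈ X
      · rw [← hx v hvX, ← hy v hvX]; exact hdiff v hvY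
      · exact hx'y' v hvX

lemma EXC_supported (hd : ∀ v, 1 ≤ d v) {X : Finset V} {M : Op V d}
    (hM : SupportedOn d X M) : EXC d X M = M := by
  funext x y
  unfold EXC
  split_ifs with h
  · have : ∀ z : (v : V) → Fin (d v), M (ovrC d X x z) (ovrC d X y z) = M x y := by
      intro z
      refine (hM.2 x y (ovrC d X x z) (ovrC d X y z)
        (fun v hv => by simp [ovrC, hv]) (fun v hv => by simp [ovrC, hv]) h
        (fun v hv => by simp [ovrC, hv])).symm
    rw [Finset.sum_congr rfl (fun z _ => this z), Finset.sum_const, Finset.card_univ,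
      nsmul_eq_mul, mul_comm, mul_div_assoc, div_self (cardC_ne_zero hd), mul_one]
  · push_neg at h
    obtain ⟨v, hv, hne⟩ := h
    exact (hM.1 x y ⟨v, hv, hne⟩).symm

lemma sum_ovrC_eq_zero {X : Finset V} {K : Op V d} {w : V}
    (hpt : ptrace d ({w} : Finset V) K = 0) (hwX : w ∉ X)
    (x y : (v : V) → Fin (d v)) :
    ∑ z : (v : V) → Fin (d v), K (ovrC d X x z) (ovrC d X y z) = 0 := by
  classical
  set e := (Equiv.piEquivPiSubtypeProd (fun v : V => v ∈ ({w} : Finset V))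
    (fun v => Fin (d v))).symm with he
  rw [← Equiv.sum_comp e (fun z => K (ovrC d X x z) (ovrC d X y z)), Fintype.sum_prod_type,
    Finset.sum_comm]
  have key : ∀ (u : (v : V) → Fin (d v))
      (z₂ : (v : {v : V // v ∉ ({w} : Finset V)}) → Fin (d v.1))
      (z₁ : (v : {v : V // v ∈ ({w} : Finset V)}) → Fin (d v.1)),
      ovrC d X u (e (z₁, z₂)) =
        mergeConfig d {w} (fun v => if v.1 ∈ X then u v.1 else z₂ v) z₁ := by
    intro u z₂ z₁
    funext v
    by_cases hv : v ∈ ({w} : Finset V)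
    · rw [Finset.mem_singleton] at hv; subst hv
      rw [he]
      simp only [ovrC, mergeConfig, Equiv.piEquivPiSubtypeProd_symm_apply]
      rw [if_neg hwX, dif_pos (Finset.mem_singleton_self v),
        dif_pos (Finset.mem_singleton_self v)]
    · rw [he]
      simp only [ovrC, mergeConfig, Equiv.piEquivPiSubtypeProd_symm_apply]
      rw [dif_neg hv, dif_neg hv]
  refine Finset.sum_eq_zero fun z₂ _ => ?_
  calc ∑ z₁ : (v : {v : V // v ∈ ({w} : Finset V)}) → Fin (d v.1),
        K (ovrC d X x (e (z₁, z₂))) (ovrC d X y (e (z₁, z₂)))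
      = ptrace d {w} K (fun v => if v.1 ∈ X then x v.1 else z₂ v)
          (fun v => if v.1 ∈ X then y v.1 else z₂ v) := by
        refine Finset.sum_congr rfl fun z₁ _ => ?_
        rw [key x z₂ z₁, key y z₂ z₁]
    _ = 0 := by rw [hpt]; rfl

lemma EXC_genuine_zero {X Y : Finset V} {K : Op V d} (hK : Genuine d Y K)
    {w : V} (hw : w ∈ Y) (hwX : w ∉ X) : EXC d X K = 0 := by
  have hpt : ptrace d ({w} : Finset V) K = 0 :=
    hK.2 {w} ⟨w, Finset.mem_singleton_self w⟩ (Finset.singleton_subset_iff.2 hw)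
  funext x y
  unfold EXC
  split_ifs with h
  · rw [sum_ovrC_eq_zero hpt hwX x y, zero_div]; rfl
  · rfl

lemma EXC_erase {w : V} {M : Op V d} (hM : SupportedOn d ({w}ᶜ : Finset V) M)
    (X : Finset V) : EXC d X M = EXC d (X.erase w) M := by
  by_cases hw : w ∈ X
  swap
  · rw [Finset.erase_eq_of_notMem hw]
  funext x y
  by_cases hxy : x w = y w
  · have hcond : (∀ v, v ∉ X → x v = y v) ↔ (∀ v, v ∉ X.erase w → x v = y v) := by
      constructor
      · intro h v hv
        by_cases hvw : v = w
        · subst hvw; exact hxy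
        · exact h v (fun hvX => hv (Finset.mem_erase.2 ⟨hvw, hvX⟩))
      · intro h v hv; exact h v (fun h' => hv (Finset.mem_of_mem_erase h'))
    unfold EXC
    by_cases h1 : ∀ v, v ∉ X → x v = y v
    · rw [if_pos h1, if_pos (hcond.1 h1)]
      congr 1
      refine Finset.sum_congr rfl fun z _ => ?_
      have hiff : ∀ v, v ≠ w → (v ∈ X ↔ v ∈ X.erase w) := by
        intro v hvw; rw [Finset.mem_erase]; exact ⟨fun h => ⟨hvw, h⟩, fun h => h.2⟩
      refine hM.2 _ _ _ _ ?_ ?_ ?_ ?_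
      · intro v hv
        have hvw : v ≠ w := by simpa using hv
        simp only [ovrC]
        by_cases hvX : v ∈ X
        · rw [if_pos hvX, if_pos ((hiff v hvw).1 hvX)]
        · rw [if_neg hvX, if_neg (fun h => hvX ((hiff v hvw).2 h))]
      · intro v hv
        have hvw : v ≠ w := by simpa using hv
        simp only [ovrC]
        by_cases hvX : v ∈ X
        · rw [if_pos hvX, if_pos ((hiff v hvw).1 hvX)]
        · rw [if_neg hvX, if_neg (fun h => hvX ((hiff v hvw).2 h))]
      · intro v hv
        have hvw : v = w := by simpa using hv
        subst hvw
        simp only [ovrC, if_pos hw]; exact hxy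
      · intro v hv
        have hvw : v = w := by simpa using hv
        subst hvw
        simp only [ovrC, if_neg (Finset.notMem_erase v X)]
    · rw [if_neg h1, if_neg (fun h => h1 (hcond.2 h))]
  · unfold EXC
    have h2 : ¬ ∀ v, v ∉ X.erase w → x v = y v :=
      fun h => hxy (h w (Finset.notMem_erase w X))
    rw [if_neg h2]
    split_ifs with h1
    · rw [Finset.sum_eq_zero, zero_div]
      intro z _
      refine hM.1 _ _ ⟨w, by simp, ?_⟩
      simp only [ovrC, if_pos hw]; exact hxy
    · rfl

lemma EXC_sum {ι : Type} (s : Finset ι) (f : ι → Op V d) (X : Finset V) :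
    EXC d X (∑ i ∈ s, f i) = ∑ i ∈ s, EXC d X (f i) := by
  funext x y
  simp only [EXC, Matrix.sum_apply]
  split_ifs with h
  · rw [← Finset.sum_div, Finset.sum_comm]
  · exact Finset.sum_const_zero.symm

lemma EXC_add (X : Finset V) (M N : Op V d) :
    EXC d X (M + N) = EXC d X M + EXC d X N := by
  funext x y
  simp only [EXC, Matrix.add_apply]
  split_ifs with h
  · rw [Finset.sum_add_distrib, add_div]
  · rw [add_zero]

lemma trace_mul_zeroC (hd : ∀ v, 1 ≤ d v) {w : V} {M K : Op V d}
    (hM : SupportedOn d ({w}ᶜ : Finset V) M) {X : Finset V} (hK : Genuine d X K)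
    (hw : w ∈ X) : (M * K).trace = 0 := by
  classical
  have hpt : ptrace d ({w} : Finset V) K = 0 :=
    hK.2 {w} ⟨w, Finset.mem_singleton_self w⟩ (Finset.singleton_subset_iff.2 hw)
  have hwmem : w ∈ ({w} : Finset V) := Finset.mem_singleton_self w
  have hwc : w ∉ ({w}ᶜ : Finset V) := by simp
  set e := (Equiv.piEquivPiSubtypeProd (fun v : V => v ∈ ({w} : Finset V))
    (fun v => Fin (d v))).symm with he
  have emerge : ∀ (x₁ : (v : {v : V // v ∈ ({w} : Finset V)}) → Fin (d v.1))
      (x₂ : (v : {v : V // v ∉ ({w} : Finset V)}) → Fin (d v.1)),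
      e (x₁, x₂) = mergeConfig d {w} x₂ x₁ := fun _ _ => rfl
  have esub : ∀ (x₁ : (v : {v : V // v ∈ ({w} : Finset V)}) → Fin (d v.1)) x₂,
      e (x₁, x₂) w = x₁ ⟨w, hwmem⟩ := by
    intro x₁ x₂; rw [emerge, mergeConfig, dif_pos hwmem]
  have hinj : ∀ (x₁ y₁ : (v : {v : V // v ∈ ({w} : Finset V)}) → Fin (d v.1)),
      x₁ ⟨w, hwmem⟩ = y₁ ⟨w, hwmem⟩ → x₁ = y₁ := by
    intro x₁ y₁ h
    funext s
    have hs : s = ⟨w, hwmem⟩ := Subtype.ext (Finset.mem_singleton.1 s.2)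
    rw [hs]; exact h
  set j : (v : {v : V // v ∈ ({w} : Finset V)}) → Fin (d v.1) :=
    fun v => ⟨0, hd v.1⟩ with hj
  rw [Matrix.trace]
  simp only [Matrix.diag, Matrix.mul_apply]
  rw [← Equiv.sum_comp e (fun x => ∑ y, M x y * K y x)]
  have inner : ∀ x : (v : V) → Fin (d v),
      ∑ y, M x y * K y x = ∑ q, M x (e q) * K (e q) x :=
    fun x => (Equiv.sum_comp e (fun y => M x y * K y x)).symm
  simp only [inner]
  rw [Fintype.sum_prod_type, Finset.sum_comm]
  refine Finset.sum_eq_zero fun x₂ _ => ?_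
  have step1 : ∀ x₁, (∑ q, M (e (x₁, x₂)) (e q) * K (e q) (e (x₁, x₂)))
      = ∑ y₂, M (e (x₁, x₂)) (e (x₁, y₂)) * K (e (x₁, y₂)) (e (x₁, x₂)) := by
    intro x₁
    rw [Fintype.sum_prod_type, Finset.sum_comm]
    refine Finset.sum_congr rfl fun y₂ _ => ?_
    refine Finset.sum_eq_single_of_mem x₁ (Finset.mem_univ x₁) fun y₁ _ hne => ?_
    rw [hM.1 _ _ ⟨w, hwc, ?_⟩, zero_mul]
    rw [esub, esub]
    exact fun h => hne (hinj _ _ h.symm)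
  simp only [step1]
  rw [Finset.sum_comm]
  refine Finset.sum_eq_zero fun y₂ _ => ?_
  have step2 : ∀ x₁, M (e (x₁, x₂)) (e (x₁, y₂)) = M (e (j, x₂)) (e (j, y₂)) := by
    intro x₁
    simp only [emerge]
    refine hM.2 _ _ _ _ ?_ ?_ ?_ ?_
    · intro v hv
      have hv' : v ∉ ({w} : Finset V) := by simpa using hv
      simp only [mergeConfig, dif_neg hv']
    · intro v hv
      have hv' : v ∉ ({w} : Finset V) := by simpa using hv
      simp only [mergeConfig, dif_neg hv']
    · intro v hv
      have hv' : v ∈ ({w} : Finset V) := by simpa using hv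
      simp only [mergeConfig, dif_pos hv']
    · intro v hv
      have hv' : v ∈ ({w} : Finset V) := by simpa using hv
      simp only [mergeConfig, dif_pos hv']
  calc ∑ x₁, M (e (x₁, x₂)) (e (x₁, y₂)) * K (e (x₁, y₂)) (e (x₁, x₂))
      = M (e (j, x₂)) (e (j, y₂)) * ∑ x₁, K (e (x₁, y₂)) (e (x₁, x₂)) := by
        rw [Finset.mul_sum]
        exact Finset.sum_congr rfl fun x₁ _ => by rw [step2]
    _ = 0 := by
        have h0 : (∑ x₁, K (e (x₁, y₂)) (e (x₁, x₂))) = ptrace d {w} K y₂ x₂ :=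
          Finset.sum_congr rfl fun x₁ _ => by rw [emerge, emerge]
        rw [h0, hpt]
        simp

end CumulantAux


/-- if `H = H₁ + H₂` with `H₁` supported away from `c` and `H₂` supported
away from `a`, then `Tr(H K) = 0` for any `K` genuine on a set containing both `a` and `c`;
consequently the corresponding cumulants of `H` vanish. -/
theorem cumulant_vanishes_of_split {V : Type} [Fintype V] [DecidableEq V]
    (d : V → ℕ) (hd : ∀ v, 1 ≤ d v) (a c : V) (hac : a ≠ c)
    (H H₁ H₂ : Op V d) (hH : H = H₁ + H₂)
    (h₁ : SupportedOn d ({c}ᶜ : Finset V) H₁)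
    (h₂ : SupportedOn d ({a}ᶜ : Finset V) H₂) :
    (∀ (X : Finset V) (K : Op V d), Genuine d X K → a ∈ X → c ∈ X →
      (H * K).trace = 0) ∧
    (∀ K : Finset V → Op V d, IsCumulantDecomp d H K →
      ∀ X : Finset V, a ∈ X → c ∈ X → K X = 0) := by
  constructor
  · intro X K hK ha hc
    rw [hH, add_mul, Matrix.trace_add,
      trace_mul_zeroC hd h₁ hK hc, trace_mul_zeroC hd h₂ hK ha, add_zero]
  · intro K hKdec X haX hcX
    obtain ⟨hK, hHsum⟩ := hKdec
    have hFH : ∀ Z : Finset V, EXC d Z H = ∑ Y ∈ Z.powerset, K Y := by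
      intro Z
      conv_lhs => rw [hHsum]
      rw [EXC_sum]
      have hterm : ∀ Y : Finset V, EXC d Z (K Y) = if Y ⊆ Z then K Y else 0 := by
        intro Y
        by_cases hYZ : Y ⊆ Z
        · rw [if_pos hYZ, EXC_supported hd (supportedOn_monoC hYZ (hK Y).1)]
        · rw [if_neg hYZ]
          obtain ⟨u, hu, huZ⟩ : ∃ u, u ∈ Y ∧ u ∉ Z := by
            by_contra hcon; push_neg at hcon; exact hYZ fun u hu => hcon u hu
          exact EXC_genuine_zero (hK Y) hu huZ
      rw [Finset.sum_congr rfl fun Y _ => hterm Y, ← Finset.sum_filter]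
      congr 1
      ext Y
      simp [Finset.mem_powerset]
    have hsplit : ∀ Z : Finset V,
        EXC d Z H = EXC d (Z.erase c) H₁ + EXC d (Z.erase a) H₂ := by
      intro Z
      conv_lhs => rw [hH]
      rw [EXC_add, EXC_erase h₁, EXC_erase h₂]
    have e1 : ∀ (Z : Finset V) (u : V),
        ∑ Y ∈ Z.powerset.filter (fun Y => u ∈ Y), K Y
          = (∑ Y ∈ Z.powerset, K Y) - ∑ Y ∈ (Z.erase u).powerset, K Y := by
      intro Z u
      have hp : (Z.erase u).powerset = Z.powerset.filter (fun Y => u ∉ Y) := by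
        ext Y
        simp only [Finset.mem_powerset, Finset.mem_filter, Finset.subset_erase]
      rw [hp, eq_sub_iff_add_eq]
      exact Finset.sum_filter_add_sum_filter_not _ _ _
    have key0 : ∀ Xs : Finset V,
        ∑ Y ∈ Xs.powerset.filter (fun Y => a ∈ Y ∧ c ∈ Y), K Y = 0 := by
      intro Xs
      have hsum : ∑ Y ∈ Xs.powerset.filter (fun Y => a ∈ Y ∧ c ∈ Y), K Y
          = (∑ Y ∈ Xs.powerset.filter (fun Y => a ∈ Y), K Y)
            - ∑ Y ∈ (Xs.erase c).powerset.filter (fun Y => a ∈ Y), K Y := by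
        have hset1 : (Xs.erase c).powerset.filter (fun Y => a ∈ Y)
            = (Xs.powerset.filter (fun Y => a ∈ Y)).filter (fun Y => c ∉ Y) := by
          ext Y
          simp only [Finset.mem_filter, Finset.mem_powerset, Finset.subset_erase]
          tauto
        have hset2 : Xs.powerset.filter (fun Y => a ∈ Y ∧ c ∈ Y)
            = (Xs.powerset.filter (fun Y => a ∈ Y)).filter (fun Y => c ∈ Y) := by
          rw [Finset.filter_filter]
        rw [hset1, hset2, eq_sub_iff_add_eq]
        exact Finset.sum_filter_add_sum_filter_not _ _ _
      rw [hsum, e1, e1, ← hFH, ← hFH, ← hFH, ← hFH, hsplit, hsplit, hsplit, hsplit]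
      have h1 : (Xs.erase a).erase a = Xs.erase a := Finset.erase_idem
      have h2 : (Xs.erase c).erase c = Xs.erase c := Finset.erase_idem
      have h3 : ((Xs.erase c).erase a).erase c = (Xs.erase c).erase a := by
        rw [Finset.erase_right_comm, Finset.erase_idem]
      have h4 : ((Xs.erase c).erase a).erase a = (Xs.erase c).erase a :=
        Finset.erase_idem
      have h5 : (Xs.erase a).erase c = (Xs.erase c).erase a :=
        Finset.erase_right_comm
      rw [h1, h2, h3, h4, h5]
      abel
    have KX0 : ∀ Xs : Finset V, a ∈ Xs → c ∈ Xs → K Xs = 0 := by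
      intro Xs
      induction Xs using Finset.strongInduction with
      | _ Xs ih =>
        intro ha hc
        have hmem : Xs ∈ Xs.powerset.filter (fun Y => a ∈ Y ∧ c ∈ Y) := by
          simp [Finset.mem_powerset, ha, hc]
        have hsingle : ∑ Y ∈ Xs.powerset.filter (fun Y => a ∈ Y ∧ c ∈ Y), K Y
            = K Xs := by
          refine Finset.sum_eq_single_of_mem Xs hmem fun Y hY hne => ?_
          obtain ⟨hYp, haY, hcY⟩ := Finset.mem_filter.1 hY |>.imp id fun h => h
          exact ih Y (lt_of_le_of_ne (Finset.mem_powerset.1 (Finset.mem_filter.1 hY).1)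
            hne) (Finset.mem_filter.1 hY).2.1 (Finset.mem_filter.1 hY).2.2
        rw [← hsingle, key0]
    exact KX0 X haX hcX

end
end

section
/- Let A, B, C be pairwise disjoint subsets with A ∪ B ∪ C = V, and let ρ be a positive definite density matrix on the multipartite system. Then the following are equivalent: (i) there exist positive semidefinite matrices Λ_AB supported on A ∪ B and Λ_BC supported on B ∪ C with [Λ_AB, Λ_BC] = 0 and ρ = Λ_AB · Λ_BC; (ii) there exist Hermitian matrices H_AB supported on A ∪ B and H_BC supported on B ∪ C with [H_AB, H_BC] = 0 and ρ = exp(H_AB + H_BC). -/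
open Matrix
open scoped ComplexOrder

noncomputable section

namespace LPIE

variable {V : Type} [Fintype V] [DecidableEq V] {d : V → ℕ} {S : Finset V}

lemma supported_zero : SupportedOn d S (0 : Op V d) :=
  ⟨fun _ _ _ => rfl, fun _ _ _ _ _ _ _ _ => rfl⟩

lemma supported_add {M N : Op V d} (hM : SupportedOn d S M) (hN : SupportedOn d S N) :
    SupportedOn d S (M + N) := by
  refine ⟨fun x y h => ?_, fun x y x' y' hx hy hxy hxy' => ?_⟩
  · show M x y + N x y = 0
    rw [hM.1 x y h, hN.1 x y h, add_zero]
  · show M x y + N x y = M x' y' + N x' y'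
    rw [hM.2 x y x' y' hx hy hxy hxy', hN.2 x y x' y' hx hy hxy hxy']

lemma supported_smul {R : Type*} [SMulZeroClass R ℂ] (c : R) {M : Op V d}
    (hM : SupportedOn d S M) : SupportedOn d S (c • M) := by
  refine ⟨fun x y h => ?_, fun x y x' y' hx hy hxy hxy' => ?_⟩
  · show c • M x y = 0
    rw [hM.1 x y h, smul_zero]
  · show c • M x y = c • M x' y'
    rw [hM.2 x y x' y' hx hy hxy hxy']

lemma supported_one : SupportedOn d S (1 : Op V d) := by
  constructor
  · rintro x y ⟨v, _, hxy⟩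
    exact Matrix.one_apply_ne fun h => hxy (congrFun h v)
  · intro x y x' y' hx hy hxy hxy'
    have hiff : x = y ↔ x' = y' := by
      constructor
      · intro h; funext v
        by_cases hv : v ∈ S
        · rw [← hx v hv, ← hy v hv, h]
        · exact hxy' v hv
      · intro h; funext v
        by_cases hv : v ∈ S
        · rw [hx v hv, hy v hv, h]
        · exact hxy v hv
    simp only [Matrix.one_apply]
    exact if_congr hiff rfl rfl

lemma supported_mul {M N : Op V d} (hM : SupportedOn d S M) (hN : SupportedOn d S N) :
    SupportedOn d S (M * N) := by
  classical
  constructor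
  · rintro x y ⟨v, hv, hxy⟩
    rw [Matrix.mul_apply]
    refine Finset.sum_eq_zero fun z _ => ?_
    by_cases h : ∃ w, w ∉ S ∧ x w ≠ z w
    · rw [hM.1 x z h, zero_mul]
    · push_neg at h
      rw [hN.1 z y ⟨v, hv, by rw [← h v hv]; exact hxy⟩, mul_zero]
  · intro x y x' y' hx hy hxy hxy'
    rw [Matrix.mul_apply, Matrix.mul_apply]
    set T := Finset.univ.filter (fun z : (v : V) → Fin (d v) => ∀ v ∉ S, z v = x v) with hT
    set T' := Finset.univ.filter (fun z : (v : V) → Fin (d v) => ∀ v ∉ S, z v = x' v) with hT'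
    have hmemT : ∀ z, z ∈ T ↔ ∀ v ∉ S, z v = x v := by
      intro z; simp [hT]
    have hmemT' : ∀ z, z ∈ T' ↔ ∀ v ∉ S, z v = x' v := by
      intro z; simp [hT']
    have hL : ∑ z, M x z * N z y = ∑ z ∈ T, M x z * N z y := by
      refine (Finset.sum_subset (Finset.subset_univ T) fun z _ hz => ?_).symm
      have : ∃ w, w ∉ S ∧ x w ≠ z w := by
        rw [hmemT] at hz; push_neg at hz
        obtain ⟨w, hw, hne⟩ := hz
        exact ⟨w, hw, fun h => hne h.symm⟩
      rw [hM.1 x z this, zero_mul]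
    have hR : ∑ z, M x' z * N z y' = ∑ z ∈ T', M x' z * N z y' := by
      refine (Finset.sum_subset (Finset.subset_univ T') fun z _ hz => ?_).symm
      have : ∃ w, w ∉ S ∧ x' w ≠ z w := by
        rw [hmemT'] at hz; push_neg at hz
        obtain ⟨w, hw, hne⟩ := hz
        exact ⟨w, hw, fun h => hne h.symm⟩
      rw [hM.1 x' z this, zero_mul]
    rw [hL, hR]
    refine Finset.sum_nbij' (fun z => fun v => if v ∈ S then z v else x' v)
      (fun z => fun v => if v ∈ S then z v else x v) ?_ ?_ ?_ ?_ ?_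
    · intro z hz
      rw [hmemT']
      intro v hv
      simp [hv]
    · intro z hz
      rw [hmemT]
      intro v hv
      simp [hv]
    · intro z hz
      funext v
      by_cases hv : v ∈ S
      · simp [hv]
      · simp only [hv, if_false]
        exact ((hmemT z).1 hz v hv).symm
    · intro z hz
      funext v
      by_cases hv : v ∈ S
      · simp [hv]
      · simp only [hv, if_false]
        exact ((hmemT' z).1 hz v hv).symm
    · intro z hz
      have hzx := (hmemT z).1 hz
      have e1 : M x z = M x' (fun v => if v ∈ S then z v else x' v) := by
        refine hM.2 x z x' _ hx (fun v hv => (if_pos hv).symm)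
          (fun v hv => (hzx v hv).symm) (fun v hv => (if_neg hv).symm)
      have e2 : N z y = N (fun v => if v ∈ S then z v else x' v) y' := by
        refine hN.2 z y _ y' (fun v hv => (if_pos hv).symm) hy
          (fun v hv => (hzx v hv).trans (hxy v hv)) (fun v hv => (if_neg hv).trans (hxy' v hv))
      rw [e1, e2]

lemma supported_pow {M : Op V d} (hM : SupportedOn d S M) (n : ℕ) :
    SupportedOn d S (M ^ n) := by
  induction n with
  | zero => simpa using supported_one
  | succ k ih => rw [pow_succ]; exact supported_mul ih hM

lemma supported_sum {ι : Type*} (s : Finset ι) (f : ι → Op V d)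
    (h : ∀ i ∈ s, SupportedOn d S (f i)) : SupportedOn d S (∑ i ∈ s, f i) := by
  classical
  induction s using Finset.induction_on with
  | empty => simpa using (supported_zero (d := d) (S := S))
  | insert _ _ hns ih =>
    rw [Finset.sum_insert hns]
    exact supported_add (h _ (Finset.mem_insert_self _ _))
      (ih fun i hi => h i (Finset.mem_insert_of_mem hi))

lemma supported_aeval {Λ : Op V d} (hΛ : SupportedOn d S Λ) (p : Polynomial ℝ) :
    SupportedOn d S (Polynomial.aeval Λ p) := by
  rw [Polynomial.aeval_eq_sum_range]
  exact supported_sum _ _ fun i _ => supported_smul _ (supported_pow hΛ i)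

lemma isClosed_setOf_imp {α : Type*} [TopologicalSpace α] (P : Prop) {Q : α → Prop}
    (h : IsClosed {a | Q a}) : IsClosed {a | P → Q a} := by
  by_cases hP : P
  · simpa [hP] using h
  · simp [hP]

lemma isClosed_supported (d : V → ℕ) (S : Finset V) :
    IsClosed {M : Op V d | SupportedOn d S M} := by
  have hcont : ∀ (x y : (v : V) → Fin (d v)), Continuous fun M : Op V d => M x y :=
    fun x y => (continuous_apply y).comp (continuous_apply x)
  have hset : {M : Op V d | SupportedOn d S M} =
      (⋂ (x) (y), {M : Op V d | (∃ v, v ∉ S ∧ x v ≠ y v) → M x y = 0}) ∩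
      (⋂ (x) (y) (x') (y'), {M : Op V d |
        ((∀ v ∈ S, x v = x' v) ∧ (∀ v ∈ S, y v = y' v) ∧ (∀ v, v ∉ S → x v = y v) ∧
          (∀ v, v ∉ S → x' v = y' v)) → M x y = M x' y'}) := by
    ext M
    simp only [Set.mem_inter_iff, Set.mem_iInter, Set.mem_setOf_eq, SupportedOn]
    constructor
    · rintro ⟨h1, h2⟩
      exact ⟨h1, fun x y x' y' ⟨a, b, c, e⟩ => h2 x y x' y' a b c e⟩
    · rintro ⟨h1, h2⟩
      exact ⟨h1, fun x y x' y' a b c e => h2 x y x' y' ⟨a, b, c, e⟩⟩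
  rw [hset]
  refine IsClosed.inter ?_ ?_
  · exact isClosed_iInter fun x => isClosed_iInter fun y =>
      isClosed_setOf_imp _ (isClosed_eq (hcont x y) continuous_const)
  · exact isClosed_iInter fun x => isClosed_iInter fun y => isClosed_iInter fun x' =>
      isClosed_iInter fun y' =>
      isClosed_setOf_imp _ (isClosed_eq (hcont x y) (hcont x' y'))

lemma supported_exp {H : Op V d} (h : SupportedOn d S H) :
    SupportedOn d S (NormedSpace.exp H) := by
  have hexp : NormedSpace.exp H = ∑' n : ℕ, ((n.factorial : ℂ))⁻¹ • H ^ n := by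
    rw [NormedSpace.exp_eq_tsum ℂ]
  rw [hexp]
  by_cases hsum : Summable fun n : ℕ => ((n.factorial : ℂ))⁻¹ • H ^ n
  · refine (isClosed_supported d S).mem_of_tendsto hsum.hasSum ?_
    exact Filter.Eventually.of_forall fun s => supported_sum _ _ fun i _ =>
      supported_smul _ (supported_pow h i)
  · rw [tsum_eq_zero_of_not_summable hsum]
    exact supported_zero

lemma commute_aeval {A : Type*} [Ring A] [Algebra ℝ A] {a b : A} (h : Commute a b)
    (p q : Polynomial ℝ) : Commute (Polynomial.aeval a p) (Polynomial.aeval b q) := by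
  rw [Polynomial.aeval_eq_sum_range, Polynomial.aeval_eq_sum_range]
  refine Commute.sum_left _ _ _ fun i _ => Commute.sum_right _ _ _ fun j _ => ?_
  exact ((h.pow_pow i j).smul_left _).smul_right _

end LPIE

def conjAlgHom {A : Type*} [Ring A] [Algebra ℝ A] (u : Aˣ) : A →ₐ[ℝ] A where
  toFun x := ↑u * x * ↑u⁻¹
  map_one' := by simp
  map_mul' x y := by simp [mul_assoc, Units.inv_mul_cancel_left]
  map_zero' := by simp
  map_add' x y := by simp [mul_add, add_mul]
  commutes' r := by
    show ↑u * algebraMap ℝ A r * ↑u⁻¹ = algebraMap ℝ A r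
    rw [mul_assoc, Algebra.commutes, ← mul_assoc, Units.mul_inv, one_mul]

namespace LPIE

lemma posSemidef_exp {n : Type} [Fintype n] [DecidableEq n] {H : Matrix n n ℂ}
    (h : H.IsHermitian) : (NormedSpace.exp H).PosSemidef := by
  have h2 : ((2⁻¹ : ℂ) • H).IsHermitian := by
    rw [Matrix.IsHermitian, Matrix.conjTranspose_smul, h.eq]
    congr 1
    simp
  have hsum : (2⁻¹ : ℂ) • H + (2⁻¹ : ℂ) • H = H := by
    rw [← add_smul]; norm_num
  have key : NormedSpace.exp H =
      (NormedSpace.exp ((2⁻¹ : ℂ) • H))ᴴ * NormedSpace.exp ((2⁻¹ : ℂ) • H) := by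
    conv_lhs => rw [← hsum]
    rw [Matrix.exp_add_of_commute _ _ (Commute.refl _)]
    congr 1
    rw [← Matrix.exp_conjTranspose, h2.eq]
  rw [key]
  exact Matrix.posSemidef_conjTranspose_mul_self _

lemma exists_log {n : Type} [Fintype n] [DecidableEq n] {Λ : Matrix n n ℂ}
    (hpsd : Λ.PosSemidef) (hdet : Λ.det ≠ 0) :
    ∃ H : Matrix n n ℂ, H.IsHermitian ∧ NormedSpace.exp H = Λ ∧
      ∃ p : Polynomial ℝ, H = Polynomial.aeval Λ p := by
  classical
  have hherm := hpsd.isHermitian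
  have hpos : ∀ i, 0 < hherm.eigenvalues i := by
    intro i
    rcases lt_or_eq_of_le (hpsd.eigenvalues_nonneg i) with h | h
    · exact h
    · exfalso
      apply hdet
      rw [hherm.det_eq_prod_eigenvalues]
      exact Finset.prod_eq_zero (Finset.mem_univ i) (by rw [← h]; simp)
  set Uu := hherm.eigenvectorUnitary with hUu
  have h1 : (Uu : Matrix n n ℂ) * star (Uu : Matrix n n ℂ) = 1 :=
    Matrix.mem_unitaryGroup_iff.mp Uu.2
  have h2 : star (Uu : Matrix n n ℂ) * (Uu : Matrix n n ℂ) = 1 :=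
    Matrix.mem_unitaryGroup_iff'.mp Uu.2
  set u : (Matrix n n ℂ)ˣ := ⟨↑Uu, star (Uu : Matrix n n ℂ), h1, h2⟩ with hu
  have hΛ : Λ = (u : Matrix n n ℂ) * Matrix.diagonal (RCLike.ofReal ∘ hherm.eigenvalues) *
      ((u⁻¹ : (Matrix n n ℂ)ˣ) : Matrix n n ℂ) :=
    hherm.spectral_theorem
  set lg : n → ℂ := fun i => ((Real.log (hherm.eigenvalues i) : ℝ) : ℂ) with hlg
  refine ⟨(u : Matrix n n ℂ) * Matrix.diagonal lg * ((u⁻¹ : (Matrix n n ℂ)ˣ) : Matrix n n ℂ),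
    ?_, ?_, ?_⟩
  · show ((u : Matrix n n ℂ) * Matrix.diagonal lg * ((u⁻¹ : (Matrix n n ℂ)ˣ) : Matrix n n ℂ))ᴴ
      = (u : Matrix n n ℂ) * Matrix.diagonal lg * ((u⁻¹ : (Matrix n n ℂ)ˣ) : Matrix n n ℂ)
    have hinv : ((u⁻¹ : (Matrix n n ℂ)ˣ) : Matrix n n ℂ) = star (Uu : Matrix n n ℂ) := rfl
    have hval : (u : Matrix n n ℂ) = (Uu : Matrix n n ℂ) := rfl
    rw [hinv, hval, Matrix.star_eq_conjTranspose,
      Matrix.conjTranspose_mul, Matrix.conjTranspose_mul,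
      Matrix.conjTranspose_conjTranspose, Matrix.diagonal_conjTranspose]
    have : star lg = lg := by
      funext i
      simp [hlg, Complex.conj_ofReal]
    rw [this, Matrix.mul_assoc]
  · rw [Matrix.exp_units_conj u (Matrix.diagonal lg), Matrix.exp_diagonal]
    have : NormedSpace.exp lg = RCLike.ofReal ∘ hherm.eigenvalues := by
      funext i
      rw [Pi.coe_exp]
      show NormedSpace.exp (lg i) = _
      rw [← Complex.exp_eq_exp_ℂ, hlg]
      show Complex.exp ((Real.log (hherm.eigenvalues i) : ℝ) : ℂ) = _
      rw [← Complex.ofReal_exp, Real.exp_log (hpos i)]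
      rfl
    rw [this, ← hΛ]
  · set s : Finset ℝ := Finset.image hherm.eigenvalues Finset.univ with hs
    set p : Polynomial ℝ := Lagrange.interpolate s id Real.log with hp
    have hpeval : ∀ i, Polynomial.eval (hherm.eigenvalues i) p = Real.log (hherm.eigenvalues i) :=
      fun i => Lagrange.eval_interpolate_at_node (v := id) (r := Real.log) (Set.injOn_id _)
        (Finset.mem_image_of_mem _ (Finset.mem_univ i))
    refine ⟨p, ?_⟩
    rw [hΛ]
    have e1 : Polynomial.aeval ((u : Matrix n n ℂ) * Matrix.diagonal (RCLike.ofReal ∘ hherm.eigenvalues) * ((u⁻¹ : (Matrix n n ℂ)ˣ) : Matrix n n ℂ)) p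
        = (conjAlgHom u) (Polynomial.aeval (Matrix.diagonal (RCLike.ofReal ∘ hherm.eigenvalues)) p) := by
      exact (Polynomial.aeval_algHom_apply (conjAlgHom u)
        (Matrix.diagonal (RCLike.ofReal ∘ hherm.eigenvalues)) p)
    have e2 : Polynomial.aeval (Matrix.diagonal (RCLike.ofReal ∘ hherm.eigenvalues)) p
        = Matrix.diagonal (Polynomial.aeval (RCLike.ofReal ∘ hherm.eigenvalues : n → ℂ) p) := by
      exact (Polynomial.aeval_algHom_apply (Matrix.diagonalAlgHom ℝ)
        (RCLike.ofReal ∘ hherm.eigenvalues) p)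
    have e3 : (Polynomial.aeval (RCLike.ofReal ∘ hherm.eigenvalues : n → ℂ) p) = lg := by
      funext i
      have haa := Polynomial.aeval_algHom_apply (Pi.evalAlgHom ℝ (fun _ : n => ℂ) i)
        (RCLike.ofReal ∘ hherm.eigenvalues) p
      refine Eq.trans haa.symm ?_
      show Polynomial.aeval ((hherm.eigenvalues i : ℝ) : ℂ) p = lg i
      have : ((hherm.eigenvalues i : ℝ) : ℂ) = algebraMap ℝ ℂ (hherm.eigenvalues i) := rfl
      rw [this, Polynomial.aeval_algebraMap_apply_eq_algebraMap_eval, hpeval i]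
      rfl
    rw [e1, e2, e3]
    rfl

end LPIE


/-- for a positive definite density matrix and a partition `A ∪ B ∪ C = V`,
the commuting-product form `ρ = Λ_AB Λ_BC` and the commuting-exponential form
`ρ = exp(H_AB + H_BC)` are equivalent. -/
theorem lambda_product_iff_exp {V : Type} [Fintype V] [DecidableEq V]
    (d : V → ℕ) (hd : ∀ v, 1 ≤ d v) (A B C : Finset V)
    (hAB : Disjoint A B) (hAC : Disjoint A C) (hBC : Disjoint B C)
    (hcover : A ∪ B ∪ C = Finset.univ)
    (ρ : Op V d) (hρ : ρ.PosDef) (htr : ρ.trace = 1) :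
    (∃ Λ_AB Λ_BC : Op V d, Λ_AB.PosSemidef ∧ Λ_BC.PosSemidef ∧
      SupportedOn d (A ∪ B) Λ_AB ∧ SupportedOn d (B ∪ C) Λ_BC ∧
      Λ_AB * Λ_BC = Λ_BC * Λ_AB ∧ ρ = Λ_AB * Λ_BC) ↔
    (∃ H_AB H_BC : Op V d, H_AB.IsHermitian ∧ H_BC.IsHermitian ∧
      SupportedOn d (A ∪ B) H_AB ∧ SupportedOn d (B ∪ C) H_BC ∧
      H_AB * H_BC = H_BC * H_AB ∧ ρ = NormedSpace.exp (H_AB + H_BC)) := by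
  constructor
  · rintro ⟨Λ1, Λ2, hP1, hP2, hS1, hS2, hcomm, hρeq⟩
    have hdet : Λ1.det * Λ2.det ≠ 0 := by
      rw [← Matrix.det_mul, ← hρeq]
      exact hρ.det_pos.ne'
    obtain ⟨H1, hH1herm, hH1exp, p1, hH1p⟩ := LPIE.exists_log hP1 (left_ne_zero_of_mul hdet)
    obtain ⟨H2, hH2herm, hH2exp, p2, hH2p⟩ := LPIE.exists_log hP2 (right_ne_zero_of_mul hdet)
    have hc : Commute H1 H2 := by
      rw [hH1p, hH2p]
      exact LPIE.commute_aeval hcomm p1 p2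
    refine ⟨H1, H2, hH1herm, hH2herm, ?_, ?_, hc, ?_⟩
    · rw [hH1p]; exact LPIE.supported_aeval hS1 p1
    · rw [hH2p]; exact LPIE.supported_aeval hS2 p2
    · rw [Matrix.exp_add_of_commute _ _ hc, hH1exp, hH2exp, hρeq]
  · rintro ⟨H1, H2, hH1, hH2, hS1, hS2, hcomm, hρeq⟩
    have hc : Commute H1 H2 := hcomm
    refine ⟨NormedSpace.exp H1, NormedSpace.exp H2, LPIE.posSemidef_exp hH1,
      LPIE.posSemidef_exp hH2, LPIE.supported_exp hS1, LPIE.supported_exp hS2, ?_, ?_⟩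
    · have e1 := Matrix.exp_add_of_commute H1 H2 hc
      have e2 := Matrix.exp_add_of_commute H2 H1 hc.symm
      rw [add_comm] at e2
      rw [← e1, ← e2]
    · rw [hρeq, Matrix.exp_add_of_commute _ _ hc]

end
end

section
/- With the five-qubit operators h▽ = σz ⊗ σz ⊗ 1 ⊗ 1 ⊗ σy, h◁ = 1 ⊗ σz ⊗ σz ⊗ 1 ⊗ σx, h△ = 1 ⊗ 1 ⊗ σz ⊗ σz ⊗ σy, h▷ = σz ⊗ 1 ⊗ 1 ⊗ σz ⊗ σx, the grouped sums commute for both shielded partitions of the wheel graph: (h▽ + h▷) · (h◁ + h△) = (h◁ + h△) · (h▽ + h▷) and (h▽ + h◁) · (h▷ + h△) = (h▷ + h△) · (h▽ + h◁). -/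
open Matrix
open scoped Kronecker

noncomputable section

/-- Pauli `σx`. -/
def σx : Matrix (Fin 2) (Fin 2) ℂ := !![0, 1; 1, 0]

/-- Pauli `σy`. -/
def σy : Matrix (Fin 2) (Fin 2) ℂ := !![0, -Complex.I; Complex.I, 0]

/-- Pauli `σz`. -/
def σz : Matrix (Fin 2) (Fin 2) ℂ := !![1, 0; 0, -1]

/-- The 2×2 identity. -/
def one2 : Matrix (Fin 2) (Fin 2) ℂ := 1

/-- `h▽ = σz ⊗ σz ⊗ 1 ⊗ 1 ⊗ σy`. -/
def hDown := σz ⊗ₖ σz ⊗ₖ one2 ⊗ₖ one2 ⊗ₖ σy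

/-- `h◁ = 1 ⊗ σz ⊗ σz ⊗ 1 ⊗ σx`. -/
def hLeft := one2 ⊗ₖ σz ⊗ₖ σz ⊗ₖ one2 ⊗ₖ σx

/-- `h△ = 1 ⊗ 1 ⊗ σz ⊗ σz ⊗ σy`. -/
def hUp := one2 ⊗ₖ one2 ⊗ₖ σz ⊗ₖ σz ⊗ₖ σy

/-- `h▷ = σz ⊗ 1 ⊗ 1 ⊗ σz ⊗ σx`. -/
def hRight := σz ⊗ₖ one2 ⊗ₖ one2 ⊗ₖ σz ⊗ₖ σx

lemma zz' : σz * σz = 1 := by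
  ext i j; fin_cases i <;> fin_cases j <;>
    simp [σz, Matrix.mul_apply, Fin.sum_univ_two, Matrix.one_apply]

lemma yx_xy' : σy * σx + σx * σy = 0 := by
  ext i j; fin_cases i <;> fin_cases j <;>
    simp [σx, σy, Matrix.mul_apply, Fin.sum_univ_two]

lemma xy_yx' : σx * σy + σy * σx = 0 := by rw [add_comm]; exact yx_xy'

/-- the grouped sums of the wheel-graph clique terms commute for both
shielded partitions: `[h▽ + h▷, h◁ + h△] = 0` and `[h▽ + h◁, h▷ + h△] = 0`. -/
theorem wheel_grouped_sums_commute :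
    (hDown + hRight) * (hLeft + hUp) = (hLeft + hUp) * (hDown + hRight) ∧
    (hDown + hLeft) * (hRight + hUp) = (hRight + hUp) * (hDown + hLeft) := by
  have e1 : hDown * hLeft + hRight * hUp = 0 := by
    simp only [hDown, hLeft, hRight, hUp, ← Matrix.mul_kronecker_mul, one2, Matrix.one_mul,
      Matrix.mul_one, zz', ← Matrix.kronecker_add, yx_xy', Matrix.kronecker_zero]
  have e2 : hLeft * hDown + hUp * hRight = 0 := by
    simp only [hDown, hLeft, hRight, hUp, ← Matrix.mul_kronecker_mul, one2, Matrix.one_mul,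
      Matrix.mul_one, zz', ← Matrix.kronecker_add, xy_yx', Matrix.kronecker_zero]
  have e3 : hDown * hUp = hUp * hDown := by
    simp only [hDown, hUp, ← Matrix.mul_kronecker_mul, one2, Matrix.one_mul, Matrix.mul_one]
  have e4 : hRight * hLeft = hLeft * hRight := by
    simp only [hRight, hLeft, ← Matrix.mul_kronecker_mul, one2, Matrix.one_mul, Matrix.mul_one]
  have f1 : hDown * hRight + hLeft * hUp = 0 := by
    simp only [hDown, hLeft, hRight, hUp, ← Matrix.mul_kronecker_mul, one2, Matrix.one_mul,
      Matrix.mul_one, zz', ← Matrix.kronecker_add, yx_xy', Matrix.kronecker_zero]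
  have f2 : hRight * hDown + hUp * hLeft = 0 := by
    simp only [hDown, hLeft, hRight, hUp, ← Matrix.mul_kronecker_mul, one2, Matrix.one_mul,
      Matrix.mul_one, zz', ← Matrix.kronecker_add, xy_yx', Matrix.kronecker_zero]
  have f3 : hDown * hUp = hUp * hDown := e3
  have f4 : hLeft * hRight = hRight * hLeft := e4.symm
  constructor
  · have : hDown * hLeft + hDown * hUp + hRight * hLeft + hRight * hUp
        = hLeft * hDown + hLeft * hRight + hUp * hDown + hUp * hRight := by
      rw [← e3, ← e4]
      have h1 := e1; have h2 := e2
      linear_combination (norm := abel) h1 - h2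
    simp only [add_mul, mul_add]
    linear_combination (norm := abel) this
  · have : hDown * hRight + hDown * hUp + hLeft * hRight + hLeft * hUp
        = hRight * hDown + hRight * hLeft + hUp * hDown + hUp * hLeft := by
      rw [← f3, ← f4]
      linear_combination (norm := abel) f1 - f2
    simp only [add_mul, mul_add]
    linear_combination (norm := abel) this


end
end
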